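/- The minimum of d_L(ℓ₁, ℓ₂) over all ℓ₁ ∈ L_a and ℓ₂ ∈ L_b equals |a - b|, attained at the pair (ℓ_a⁺, ℓ_b⁺). -/

import Mathlib

/-! Since `Gini` is affine, `|Gini ℓ₁ - Gini ℓ₂| = 2 |∫₀¹ (ℓ₁ - ℓ₂)| ≤ 2 ∫₀¹ |ℓ₁ - ℓ₂|`, so `|a - b|`
is a lower bound. It is attained by `ℓ_a⁺` and `ℓ_b⁺`, which agree a.e. with the non-crossing lines
`(1 - a) t` and `(1 - b) t`. They are Lorenz curves because raising a convex function at an extreme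
point of its domain keeps it convex. -/

open Set

/-- Membership in `L`: convex `ℓ : [0,1] → [0,1]` with `ℓ 0 = 0`, `ℓ 1 = 1`. -/
def MemLorenz (ℓ : ℝ → ℝ) : Prop :=
  ConvexOn ℝ (Icc (0:ℝ) 1) ℓ ∧ (∀ t ∈ Icc (0:ℝ) 1, ℓ t ∈ Icc (0:ℝ) 1) ∧
    ℓ 0 = 0 ∧ ℓ 1 = 1

/-- The Gini index `G(ℓ) = 1 - 2∫₀¹ ℓ`. -/
noncomputable def Gini (ℓ : ℝ → ℝ) : ℝ := 1 - 2 * ∫ t in (0:ℝ)..1, ℓ t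

/-- The curve `ℓ_a⁺`: `ℓ_a⁺(t) = (1-a)t` on `[0,1)` and `ℓ_a⁺(1) = 1`. -/
noncomputable def laPlus (a : ℝ) : ℝ → ℝ := fun t => if t = 1 then 1 else (1 - a) * t

open MeasureTheory

section ConvexOn

variable {𝕜 E β : Type*}

theorem ConvexOn.of_le_of_eqOn_diff_extremePoints [Semiring 𝕜] [PartialOrder 𝕜]
    [IsOrderedRing 𝕜] [AddCommMonoid E] [Module 𝕜 E]
    [AddCommMonoid β] [PartialOrder β] [IsOrderedAddMonoid β] [Module 𝕜 β] [PosSMulMono 𝕜 β]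
    {s : Set E} {f g : E → β} (hf : ConvexOn 𝕜 s f) (hle : ∀ x ∈ s, f x ≤ g x)
    (heq : EqOn g f (s \ s.extremePoints 𝕜)) : ConvexOn 𝕜 s g := by
  refine ⟨hf.1, fun x hx y hy p q hp hq hpq => ?_⟩
  by_cases hext : p • x + q • y ∈ s.extremePoints 𝕜
  · rcases hp.eq_or_lt with rfl | hp
    · simp_all
    rcases hq.eq_or_lt with rfl | hq
    · simp_all
    obtain ⟨hxz, hyz⟩ := (mem_extremePoints.1 hext).2 x hx y hy ⟨p, q, hp, hq, hpq, rfl⟩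
    rw [← hxz, hyz.trans hxz.symm, ← add_smul, hpq, one_smul]
  · calc g (p • x + q • y) = f (p • x + q • y) := heq ⟨hf.1 hx hy hp hq hpq, hext⟩
      _ ≤ p • f x + q • f y := hf.2 hx hy hp hq hpq
      _ ≤ p • g x + q • g y := by gcongr <;> exact hle _ ‹_›

theorem ConvexOn.monotoneOn_of_isMinOn [Field 𝕜] [LinearOrder 𝕜] [IsStrictOrderedRing 𝕜]
    [AddCommMonoid β] [LinearOrder β]
    [IsOrderedCancelAddMonoid β] [Module 𝕜 β] [PosSMulStrictMono 𝕜 β] {a b : 𝕜} {f : 𝕜 → β}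
    (hf : ConvexOn 𝕜 (Icc a b) f) (hmin : IsMinOn f (Icc a b) a) :
    MonotoneOn f (Icc a b) := by
  intro x hx y hy hxy
  rcases hx.1.eq_or_lt with rfl | hax
  · exact hmin hy
  · exact hf.le_right_of_left_le'' (left_mem_Icc.2 (hx.1.trans hx.2)) hy hax hxy (hmin hx)

end ConvexOn

theorem MemLorenz.intervalIntegrable {ℓ : ℝ → ℝ} (h : MemLorenz ℓ) :
    IntervalIntegrable ℓ volume 0 1 := by
  obtain ⟨hconv, hmem, h0, -⟩ := h
  refine MonotoneOn.intervalIntegrable ?_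
  rw [uIcc_of_le zero_le_one]
  exact hconv.monotoneOn_of_isMinOn fun t ht =>
    show ℓ 0 ≤ ℓ t by rw [h0]; exact (hmem t ht).1

theorem abs_sub_gini_le {ℓ₁ ℓ₂ : ℝ → ℝ} (h₁ : IntervalIntegrable ℓ₁ volume 0 1)
    (h₂ : IntervalIntegrable ℓ₂ volume 0 1) :
    |Gini ℓ₁ - Gini ℓ₂| ≤ 2 * ∫ t in (0:ℝ)..1, |ℓ₁ t - ℓ₂ t| := by
  have hdiff : Gini ℓ₁ - Gini ℓ₂ = -(2 * ∫ t in (0:ℝ)..1, ℓ₁ t - ℓ₂ t) := by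
    rw [Gini, Gini, intervalIntegral.integral_sub h₁ h₂]; ring
  rw [hdiff, abs_neg, abs_mul, abs_two]
  gcongr
  exact intervalIntegral.abs_integral_le_integral_abs zero_le_one

theorem laPlus_of_ne_one (a : ℝ) {t : ℝ} (ht : t ≠ 1) : laPlus a t = (1 - a) * t :=
  if_neg ht

theorem memLorenz_laPlus {a : ℝ} (ha : a ∈ Icc (0:ℝ) 1) : MemLorenz (laPlus a) := by
  obtain ⟨ha0, ha1⟩ := ha
  have hle : ∀ t ∈ Icc (0:ℝ) 1, (1 - a) * t ≤ laPlus a t := by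
    intro t ⟨ht0, ht1⟩
    by_cases h1 : t = 1
    · simp only [laPlus, h1, if_true]; linarith
    · rw [laPlus_of_ne_one a h1]
  have hlin : ConvexOn ℝ (Icc (0:ℝ) 1) fun t => (1 - a) * t :=
    (LinearMap.mulLeft ℝ (1 - a)).convexOn (convex_Icc 0 1)
  refine ⟨hlin.of_le_of_eqOn_diff_extremePoints hle ?_, ?_, by simp [laPlus], by simp [laPlus]⟩
  · rintro t ⟨-, hext⟩
    rw [extremePoints_Icc zero_le_one] at hext
    exact laPlus_of_ne_one a fun h => hext (by simp [h])
  · intro t ⟨ht0, ht1⟩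
    by_cases h1 : t = 1
    · simp [laPlus, h1]
    · rw [laPlus_of_ne_one a h1]
      constructor <;> nlinarith

theorem laPlus_ae_eq (a : ℝ) : laPlus a =ᵐ[volume] fun t => (1 - a) * t :=
  (Measure.ae_ne volume 1).mono fun _ => laPlus_of_ne_one a

theorem gini_laPlus (a : ℝ) : Gini (laPlus a) = a := by
  rw [Gini, intervalIntegral.integral_congr_ae ((laPlus_ae_eq a).mono fun _ h _ => h),
    intervalIntegral.integral_const_mul, integral_id]
  ring

theorem two_mul_integral_abs_sub_laPlus (a b : ℝ) :
    2 * ∫ t in (0:ℝ)..1, |laPlus a t - laPlus b t| = |a - b| := by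
  have hae : ∀ᵐ t, t ∈ uIoc (0:ℝ) 1 → |laPlus a t - laPlus b t| = |a - b| * t := by
    filter_upwards [laPlus_ae_eq a, laPlus_ae_eq b] with t hta htb ht
    rw [uIoc_of_le zero_le_one] at ht
    rw [hta, htb, ← sub_mul, abs_mul, abs_of_pos ht.1, sub_sub_sub_cancel_left, abs_sub_comm]
  rw [intervalIntegral.integral_congr_ae hae, intervalIntegral.integral_const_mul, integral_id]
  ring

/-- The minimum of `d_L(ℓ₁,ℓ₂)` over `ℓ₁ ∈ L_a`, `ℓ₂ ∈ L_b` equals `|a - b|`,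
attained at the pair `(ℓ_a⁺, ℓ_b⁺)`. -/
theorem lorenz_dist_isLeast (a b : ℝ) (ha : a ∈ Icc (0:ℝ) 1) (hb : b ∈ Icc (0:ℝ) 1) :
    IsLeast {d : ℝ | ∃ ℓ₁ ℓ₂ : ℝ → ℝ, MemLorenz ℓ₁ ∧ MemLorenz ℓ₂ ∧
        Gini ℓ₁ = a ∧ Gini ℓ₂ = b ∧ d = 2 * ∫ t in (0:ℝ)..1, |ℓ₁ t - ℓ₂ t|}
      |a - b| ∧
    (2 * ∫ t in (0:ℝ)..1, |laPlus a t - laPlus b t|) = |a - b| := by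
  refine ⟨⟨⟨laPlus a, laPlus b, memLorenz_laPlus ha, memLorenz_laPlus hb, gini_laPlus a,
    gini_laPlus b, (two_mul_integral_abs_sub_laPlus a b).symm⟩, ?_⟩,
    two_mul_integral_abs_sub_laPlus a b⟩
  rintro d ⟨ℓ₁, ℓ₂, h₁, h₂, rfl, rfl, rfl⟩
  exact abs_sub_gini_le h₁.intervalIntegrable h₂.intervalIntegrable
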